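/- arXiv:1807.09874 — 4 statements merged into one kernel-verified Lean document; each statement's English description precedes it below -/
import Mathlib

section
/- Let v ≥ 0 be measurable on Ω and suppose there exists C ≥ 0 such that ∫_Ω v f dx ≤ C·max(∫_Ω ω f dx, ‖f‖_{L^p(Ω)}) for every nonnegative f ∈ L^p ∩ L^1_ω(Ω) with bounded support. Then v ∈ X_ω^q(Ω) and ‖v‖_{X_ω^q} ≤ C. -/
/-!
For `a ≥ 0` test the hypothesis against `f = 1_A (v - a ω)₊ ^ (q - 1)`, where `A` is a bounded set
on which `v` and `ω` are bounded. Since `v = (v - a ω)₊ + a ω` on the support of `f`, the integrals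
`B(a) = ∫_A (v - a ω)₊ ^ q` and `I(a) = ∫_A ω (v - a ω)₊ ^ (q - 1)` satisfy
`B + a I ≤ C max(I, B ^ (1/p))`. At `a = 0` or at a point of `[0, C]` where `I = B ^ (1/p)`
(intermediate value theorem) this reads `B ≤ (C - a) B ^ (1/p)`, i.e.
`‖(v - a ω)₊‖_{L^q(A)} ≤ C - a`.
As `A` exhausts `Ω` the sets of such `a` form a decreasing sequence of nonempty compact sets, and a
common point `a` gives the splitting `v = min(v, a ω) + (v - a ω)₊` with
`‖min(v, a ω) / ω‖_∞ ≤ a` and `‖(v - a ω)₊‖_q ≤ C - a`.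
-/

open MeasureTheory

/-- The inf-convolution norm of the sum space `X_ω^q = L^q + L^∞_{1/ω}`. -/
noncomputable def XNorm {α : Type*} [MeasurableSpace α] (μ : Measure α)
    (q : ℝ) (ω : α → ℝ) (v : α → ℝ) : ENNReal :=
  sInf {c : ENNReal | ∃ w z : α → ℝ, v = w + z ∧
    c = eLpNorm (fun x => w x / ω x) ⊤ μ + eLpNorm z (ENNReal.ofReal q) μ}

/-- Membership in the sum space `X_ω^q = L^q + L^∞_{1/ω}`. -/
def MemX {α : Type*} [MeasurableSpace α] (μ : Measure α)
    (q : ℝ) (ω : α → ℝ) (v : α → ℝ) : Prop :=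
  ∃ w z : α → ℝ, v = w + z ∧ MemLp (fun x => w x / ω x) ⊤ μ ∧
    MemLp z (ENNReal.ofReal q) μ

/-- Membership in the intersection space `L^p ∩ L^1_ω`. -/
def MemInter {α : Type*} [MeasurableSpace α] (μ : Measure α)
    (p : ℝ) (ω : α → ℝ) (g : α → ℝ) : Prop :=
  MemLp g (ENNReal.ofReal p) μ ∧ Integrable (fun x => ω x * g x) μ

open Set Filter Topology

namespace WeightedSumSpace

lemma le_rpow_of_le_mul_rpow {p q B c : ℝ} (hpq : p.HolderConjugate q) (hB : 0 ≤ B)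
    (hc : 0 ≤ c) (h : B ≤ c * B ^ (1 / p)) : B ≤ c ^ q := by
  rcases hB.eq_or_lt with rfl | hB
  · exact Real.rpow_nonneg hc q
  have hsplit : B = B ^ (1 / q) * B ^ (1 / p) := by
    rw [← Real.rpow_add hB, add_comm, hpq.one_div_add_one_div, div_one, Real.rpow_one]
  have hroot : B ^ (1 / q) ≤ c :=
    le_of_mul_le_mul_right (hsplit.symm.trans_le h) (Real.rpow_pos_of_pos hB _)
  calc B = (B ^ (1 / q)) ^ q := by
        rw [← Real.rpow_mul hB.le, one_div_mul_cancel hpq.symm.ne_zero, Real.rpow_one]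
    _ ≤ c ^ q := Real.rpow_le_rpow (Real.rpow_nonneg hB.le _) hroot hpq.symm.nonneg

lemma exists_mem_Icc_le_sub_rpow {p q C : ℝ} (hpq : p.HolderConjugate q) (hC : 0 ≤ C)
    {B I : ℝ → ℝ} (hB : ContinuousOn B (Ici 0)) (hI : ContinuousOn I (Ici 0))
    (hB0 : ∀ a, 0 ≤ B a)
    (h : ∀ a, 0 ≤ a → B a + a * I a ≤ C * max (I a) (B a ^ (1 / p))) :
    ∃ a ∈ Icc 0 C, B a ≤ (C - a) ^ q := by
  set φ : ℝ → ℝ := fun a => I a - B a ^ (1 / p)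
  have hφ : ContinuousOn φ (Ici 0) :=
    hI.sub (hB.rpow_const fun _ _ => Or.inr hpq.one_div_nonneg)
  have hφ_gt : ∀ a, C < a → φ a ≤ 0 := by
    intro a ha
    by_contra! hpos
    have hmax := h a (hC.trans ha.le)
    rw [max_eq_left (sub_pos.1 hpos).le] at hmax
    have hI : 0 < I a := (Real.rpow_nonneg (hB0 a) _).trans_lt (sub_pos.1 hpos)
    nlinarith [hB0 a]
  have hφC : φ C ≤ 0 :=
    le_of_tendsto ((hφ.continuousWithinAt hC).mono (Ioi_subset_Ici hC))
      (eventually_nhdsWithin_of_forall hφ_gt)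
  obtain ⟨a, ha, hφa, hbal⟩ : ∃ a ∈ Icc 0 C, φ a ≤ 0 ∧ a * I a = a * B a ^ (1 / p) := by
    by_cases h0 : φ 0 ≤ 0
    · exact ⟨0, left_mem_Icc.2 hC, h0, by simp⟩
    · obtain ⟨a, ha, hφa⟩ := intermediate_value_Icc' hC (hφ.mono Icc_subset_Ici_self)
        ⟨hφC, (not_le.1 h0).le⟩
      exact ⟨a, ha, hφa.le, by rw [sub_eq_zero.1 hφa]⟩
  refine ⟨a, ha, le_rpow_of_le_mul_rpow hpq (hB0 a) (sub_nonneg.2 ha.2) ?_⟩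
  have := h a ha.1
  rw [max_eq_right (sub_nonpos.1 hφa), hbal] at this
  linarith

lemma exists_mem_forall_le_of_le_succ {X : Type*} [TopologicalSpace X] [T2Space X] {K : Set X}
    (hK : IsCompact K) {F : ℕ → X → ℝ} {g : X → ℝ} (hF : ∀ n, ContinuousOn (F n) K)
    (hg : ContinuousOn g K) (hmono : ∀ n, ∀ x ∈ K, F n x ≤ F (n + 1) x)
    (hex : ∀ n, ∃ x ∈ K, F n x ≤ g x) : ∃ x ∈ K, ∀ n, F n x ≤ g x := by
  set t : ℕ → Set X := fun n => {x ∈ K | F n x ≤ g x}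
  have ht_closed : ∀ n, IsClosed (t n) := fun n => hK.isClosed.isClosed_le (hF n) hg
  obtain ⟨x, hx⟩ := IsCompact.nonempty_iInter_of_sequence_nonempty_isCompact_isClosed t
    (fun n x hx => ⟨hx.1, (hmono n x hx.1).trans hx.2⟩) hex
    (hK.of_isClosed_subset (ht_closed 0) fun x hx => hx.1) ht_closed
  have hx : ∀ n, x ∈ t n := mem_iInter.1 hx
  exact ⟨x, (hx 0).1, fun n => (hx n).2⟩

variable {α : Type*} {v ω : α → ℝ}

def excess (v ω : α → ℝ) (a : ℝ) (x : α) : ℝ := max (v x - a * ω x) 0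

lemma excess_nonneg (a : ℝ) (x : α) : 0 ≤ excess v ω a x := le_max_right _ _

lemma continuous_excess (x : α) : Continuous fun a => excess v ω a x := by
  unfold excess; fun_prop

lemma excess_le {a : ℝ} {x : α} (ha : 0 ≤ a) (hv : 0 ≤ v x) (hω : 0 ≤ ω x) :
    excess v ω a x ≤ v x :=
  max_le (sub_le_self _ (mul_nonneg ha hω)) hv

lemma min_add_excess (a : ℝ) (x : α) : min (v x) (a * ω x) + excess v ω a x = v x := by
  unfold excess
  rcases le_total (v x) (a * ω x) with h | h
  · rw [min_eq_left h, max_eq_right (sub_nonpos.2 h), add_zero]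
  · rw [min_eq_right h, max_eq_left (sub_nonneg.2 h), add_sub_cancel]

lemma mul_excess_rpow_sub_one {q a : ℝ} (hq : 1 < q) (x : α) :
    v x * excess v ω a x ^ (q - 1) =
      excess v ω a x ^ q + a * (ω x * excess v ω a x ^ (q - 1)) := by
  have hpow : excess v ω a x ^ q = excess v ω a x * excess v ω a x ^ (q - 1) := by
    conv_lhs => rw [← add_sub_cancel (1 : ℝ) q]
    rw [Real.rpow_add' (excess_nonneg a x) (by linarith), Real.rpow_one]
  rw [hpow]
  unfold excess
  rcases le_total (v x) (a * ω x) with h | h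
  · rw [max_eq_right (sub_nonpos.2 h), Real.zero_rpow (by linarith)]
    ring
  · rw [max_eq_left (sub_nonneg.2 h)]
    ring

lemma norm_mul_excess_rpow_le {c a r K : ℝ} {x : α} (ha : 0 ≤ a) (hr : 0 ≤ r)
    (hv : 0 ≤ v x) (hω : 0 ≤ ω x) (hc : |c| ≤ K) (hvK : v x ≤ K) :
    ‖c * excess v ω a x ^ r‖ ≤ K * K ^ r := by
  rw [norm_mul, Real.norm_eq_abs, Real.norm_of_nonneg (Real.rpow_nonneg (excess_nonneg a x) r)]
  exact mul_le_mul hc (Real.rpow_le_rpow (excess_nonneg a x) ((excess_le ha hv hω).trans hvK) hr)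
    (Real.rpow_nonneg (excess_nonneg a x) r) ((abs_nonneg c).trans hc)

section Truncation

variable [PseudoMetricSpace α]

def truncationSet (v ω : α → ℝ) (x₀ : α) (n : ℕ) : Set α :=
  {x | v x ≤ n} ∩ {x | ω x ≤ n} ∩ Metric.closedBall x₀ n

lemma monotone_truncationSet (x₀ : α) : Monotone (truncationSet v ω x₀) := by
  intro m n hmn x ⟨⟨hv, hω⟩, hx⟩
  have hmn' : (m : ℝ) ≤ n := Nat.cast_le.2 hmn
  exact ⟨⟨hv.trans hmn', hω.trans hmn'⟩, Metric.closedBall_subset_closedBall hmn' hx⟩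

lemma exists_mem_truncationSet (x₀ x : α) : ∃ n, x ∈ truncationSet v ω x₀ n := by
  obtain ⟨n, hn⟩ := exists_nat_ge (max (max (v x) (ω x)) (dist x x₀))
  simp only [max_le_iff] at hn
  exact ⟨n, ⟨hn.1.1, hn.1.2⟩, hn.2⟩

lemma isBounded_truncationSet (x₀ : α) (n : ℕ) :
    Bornology.IsBounded (truncationSet v ω x₀ n) :=
  Metric.isBounded_closedBall.subset inter_subset_right

end Truncation

variable [MeasurableSpace α] {μ : Measure α}

lemma measurable_excess (hv : Measurable v) (hω : Measurable ω) (a : ℝ) :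
    Measurable (excess v ω a) :=
  (hv.sub (measurable_const.mul hω)).max measurable_const

lemma measurableSet_truncationSet [PseudoMetricSpace α] [OpensMeasurableSpace α]
    (hv : Measurable v) (hω : Measurable ω) (x₀ : α) (n : ℕ) :
    MeasurableSet (truncationSet v ω x₀ n) :=
  ((measurableSet_le hv measurable_const).inter (measurableSet_le hω measurable_const)).inter
    Metric.isClosed_closedBall.measurableSet

lemma measure_truncationSet_ne_top [PseudoMetricSpace α] [ProperSpace α]
    [IsFiniteMeasureOnCompacts μ] (x₀ : α) (n : ℕ) : μ (truncationSet v ω x₀ n) ≠ ⊤ :=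
  ne_top_of_le_ne_top (isCompact_closedBall x₀ n).measure_lt_top.ne
    (measure_mono inter_subset_right)

section BoundedSet

variable {D : Set α} {w : α → ℝ} {a r K : ℝ}

lemma integrableOn_mul_excess_rpow (hv_meas : Measurable v) (hω_meas : Measurable ω)
    (hw_meas : Measurable w) (hv : ∀ x, 0 ≤ v x) (hω : ∀ x, 0 ≤ ω x) (ha : 0 ≤ a) (hr : 0 ≤ r)
    (hD : MeasurableSet D) (hμD : μ D ≠ ⊤) (hwD : ∀ x ∈ D, |w x| ≤ K) (hvD : ∀ x ∈ D, v x ≤ K) :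
    IntegrableOn (fun x => w x * excess v ω a x ^ r) D μ :=
  Measure.integrableOn_of_bounded hμD
    (hw_meas.mul ((measurable_excess hv_meas hω_meas a).pow_const r)).aestronglyMeasurable
    ((ae_restrict_iff' hD).2 (ae_of_all _ fun x hx =>
      norm_mul_excess_rpow_le ha hr (hv x) (hω x) (hwD x hx) (hvD x hx)))

lemma continuousOn_setIntegral_mul_excess_rpow (hv_meas : Measurable v) (hω_meas : Measurable ω)
    (hw_meas : Measurable w) (hv : ∀ x, 0 ≤ v x) (hω : ∀ x, 0 ≤ ω x) (hr : 0 ≤ r)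
    (hD : MeasurableSet D) (hμD : μ D ≠ ⊤) (hwD : ∀ x ∈ D, |w x| ≤ K) (hvD : ∀ x ∈ D, v x ≤ K) :
    ContinuousOn (fun a => ∫ x in D, w x * excess v ω a x ^ r ∂μ) (Ici 0) := by
  have : IsFiniteMeasure (μ.restrict D) := isFiniteMeasure_restrict.2 hμD
  refine continuousOn_of_dominated (bound := fun _ => K * K ^ r)
    (fun a ha => (integrableOn_mul_excess_rpow hv_meas hω_meas hw_meas hv hω ha hr hD hμD hwD
      hvD).aestronglyMeasurable)
    (fun a ha => (ae_restrict_iff' hD).2 (ae_of_all _ fun x hx =>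
      norm_mul_excess_rpow_le ha hr (hv x) (hω x) (hwD x hx) (hvD x hx)))
    (integrable_const _) (ae_of_all _ fun x => ?_)
  exact (continuous_const.mul ((continuous_excess x).rpow_const fun _ => Or.inr hr)).continuousOn

lemma integrableOn_excess_rpow (hv_meas : Measurable v) (hω_meas : Measurable ω)
    (hv : ∀ x, 0 ≤ v x) (hω : ∀ x, 0 ≤ ω x) (ha : 0 ≤ a) (hr : 0 ≤ r)
    (hD : MeasurableSet D) (hμD : μ D ≠ ⊤) (hvD : ∀ x ∈ D, v x ≤ K) :
    IntegrableOn (fun x => excess v ω a x ^ r) D μ := by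
  simpa using integrableOn_mul_excess_rpow (w := 1) hv_meas hω_meas measurable_const hv hω ha hr
    hD hμD (K := max K 1) (fun _ _ => by simp) fun x hx => (hvD x hx).trans (le_max_left _ _)

lemma continuousOn_setIntegral_excess_rpow (hv_meas : Measurable v) (hω_meas : Measurable ω)
    (hv : ∀ x, 0 ≤ v x) (hω : ∀ x, 0 ≤ ω x) (hr : 0 ≤ r) (hD : MeasurableSet D)
    (hμD : μ D ≠ ⊤) (hvD : ∀ x ∈ D, v x ≤ K) :
    ContinuousOn (fun a => ∫ x in D, excess v ω a x ^ r ∂μ) (Ici 0) := by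
  simpa using continuousOn_setIntegral_mul_excess_rpow (w := 1) hv_meas hω_meas
    measurable_const hv hω hr hD hμD (K := max K 1) (fun _ _ => by simp)
    fun x hx => (hvD x hx).trans (le_max_left _ _)

lemma memLp_and_eLpNorm_indicator_excess_rpow_sub_one {p q : ℝ} (hpq : p.HolderConjugate q)
    (hv_meas : Measurable v) (hω_meas : Measurable ω) (hv : ∀ x, 0 ≤ v x) (hω : ∀ x, 0 ≤ ω x)
    (ha : 0 ≤ a) (hD : MeasurableSet D) (hμD : μ D ≠ ⊤) (hvD : ∀ x ∈ D, v x ≤ K) :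
    MemLp (D.indicator fun x => excess v ω a x ^ (q - 1)) (ENNReal.ofReal p) μ ∧
      eLpNorm (D.indicator fun x => excess v ω a x ^ (q - 1)) (ENNReal.ofReal p) μ =
        ENNReal.ofReal ((∫ x in D, excess v ω a x ^ q ∂μ) ^ (1 / p)) := by
  have hp : ENNReal.ofReal p ≠ 0 := by simpa using hpq.pos
  have hpow : ∀ x, ‖excess v ω a x ^ (q - 1)‖ ^ p = excess v ω a x ^ q := by
    intro x
    rw [Real.norm_of_nonneg (Real.rpow_nonneg (excess_nonneg a x) _),
      ← Real.rpow_mul (excess_nonneg a x), hpq.symm.sub_one_mul_conj]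
  have hint := integrableOn_excess_rpow hv_meas hω_meas hv hω ha hpq.symm.nonneg hD hμD hvD
  have hmem : MemLp (fun x => excess v ω a x ^ (q - 1)) (ENNReal.ofReal p) (μ.restrict D) :=
    (integrable_norm_rpow_iff
      ((measurable_excess hv_meas hω_meas a).pow_const _).aestronglyMeasurable hp
      ENNReal.ofReal_ne_top).1 (by simp only [ENNReal.toReal_ofReal hpq.nonneg, hpow]; exact hint)
  refine ⟨(memLp_indicator_iff_restrict hD).2 hmem, ?_⟩
  rw [eLpNorm_indicator_eq_eLpNorm_restrict hD,
    hmem.eLpNorm_eq_integral_rpow_norm hp ENNReal.ofReal_ne_top]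
  simp only [ENNReal.toReal_ofReal hpq.nonneg, hpow, one_div]

lemma setIntegral_excess_rpow_add_le {p q C : ℝ} (hpq : p.HolderConjugate q)
    (hv_meas : Measurable v) (hω_meas : Measurable ω) (hv : ∀ x, 0 ≤ v x) (hω : ∀ x, 0 ≤ ω x)
    (ha : 0 ≤ a) (hD : MeasurableSet D) (hμD : μ D ≠ ⊤) (hvD : ∀ x ∈ D, v x ≤ K)
    (hωD : ∀ x ∈ D, ω x ≤ K)
    (hbound : ∀ f : α → ℝ, (∀ x, 0 ≤ f x) → MemInter μ p ω f → Function.support f ⊆ D →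
      ∫ x, v x * f x ∂μ ≤ C * max (∫ x, ω x * f x ∂μ) (eLpNorm f (ENNReal.ofReal p) μ).toReal) :
    (∫ x in D, excess v ω a x ^ q ∂μ) + a * ∫ x in D, ω x * excess v ω a x ^ (q - 1) ∂μ ≤
      C * max (∫ x in D, ω x * excess v ω a x ^ (q - 1) ∂μ)
        ((∫ x in D, excess v ω a x ^ q ∂μ) ^ (1 / p)) := by
  set f := D.indicator fun x => excess v ω a x ^ (q - 1)
  obtain ⟨hf_mem, hf_norm⟩ :=
    memLp_and_eLpNorm_indicator_excess_rpow_sub_one hpq hv_meas hω_meas hv hω ha hD hμD hvD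
  have hmul : ∀ u : α → ℝ, (fun x => u x * f x) =
      D.indicator fun x => u x * excess v ω a x ^ (q - 1) :=
    fun u => funext fun x => (indicator_mul_right D u _).symm
  have hωint : IntegrableOn (fun x => ω x * excess v ω a x ^ (q - 1)) D μ :=
    integrableOn_mul_excess_rpow hv_meas hω_meas hω_meas hv hω ha hpq.symm.sub_one_pos.le hD hμD
      (fun x hx => (abs_of_nonneg (hω x)).trans_le (hωD x hx)) hvD
  have hZint := integrableOn_excess_rpow hv_meas hω_meas hv hω ha hpq.symm.nonneg hD hμD hvD
  have key := hbound f (indicator_nonneg fun x _ => Real.rpow_nonneg (excess_nonneg a x) _)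
    ⟨hf_mem, by rw [hmul]; exact (integrable_indicator_iff hD).2 hωint⟩ support_indicator_subset
  rw [hmul, hmul, integral_indicator hD, integral_indicator hD, hf_norm, ENNReal.toReal_ofReal
    (Real.rpow_nonneg (integral_nonneg fun x => Real.rpow_nonneg (excess_nonneg a x) q) _)] at key
  simp_rw [mul_excess_rpow_sub_one hpq.symm.lt] at key
  rwa [integral_add hZint (hωint.const_mul a), integral_const_mul] at key

end BoundedSet

lemma eLpNorm_le_of_forall_setIntegral_rpow_le {Z : α → ℝ} (hZ : AEStronglyMeasurable Z μ)
    (hZ0 : ∀ x, 0 ≤ Z x) {q c : ℝ} (hq : 0 < q) (hc : 0 ≤ c) {A : ℕ → Set α}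
    (hA_mono : Monotone A) (hA_meas : ∀ n, MeasurableSet (A n)) (hA_cover : ∀ x, ∃ n, x ∈ A n)
    (hint : ∀ n, IntegrableOn (fun x => Z x ^ q) (A n) μ)
    (hle : ∀ n, ∫ x in A n, Z x ^ q ∂μ ≤ c ^ q) :
    eLpNorm Z (ENNReal.ofReal q) μ ≤ ENNReal.ofReal c := by
  have hq' : ENNReal.ofReal q ≠ 0 := by simpa using hq
  have hnorm : ∀ x, ‖Z x‖ = Z x := fun x => Real.norm_of_nonneg (hZ0 x)
  refine Lp.eLpNorm_le_of_ae_tendsto (u := atTop) (f := fun n => (A n).indicator Z)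
    (Eventually.of_forall fun n => ?_) (fun n => hZ.indicator (hA_meas n))
    (ae_of_all _ fun x => ?_)
  · have hmem : MemLp Z (ENNReal.ofReal q) (μ.restrict (A n)) :=
      (integrable_norm_rpow_iff hZ.restrict hq' ENNReal.ofReal_ne_top).1
        (by simp only [hnorm, ENNReal.toReal_ofReal hq.le]; exact hint n)
    rw [eLpNorm_indicator_eq_eLpNorm_restrict (hA_meas n),
      hmem.eLpNorm_eq_integral_rpow_norm hq' ENNReal.ofReal_ne_top]
    simp only [hnorm, ENNReal.toReal_ofReal hq.le]
    refine ENNReal.ofReal_le_ofReal ?_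
    calc (∫ x in A n, Z x ^ q ∂μ) ^ q⁻¹ ≤ (c ^ q) ^ q⁻¹ :=
          Real.rpow_le_rpow (integral_nonneg fun x => Real.rpow_nonneg (hZ0 x) q) (hle n)
            (inv_nonneg.2 hq.le)
      _ = c := Real.rpow_rpow_inv hc hq.ne'
  · obtain ⟨n, hn⟩ := hA_cover x
    exact tendsto_const_nhds.congr' ((eventually_ge_atTop n).mono fun m hm =>
      (indicator_of_mem (hA_mono hm hn) Z).symm)

lemma memX_and_XNorm_le {q s t : ℝ} {w z : α → ℝ} (hvwz : v = w + z)
    (hw : AEStronglyMeasurable (fun x => w x / ω x) μ)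
    (hw_le : eLpNorm (fun x => w x / ω x) ⊤ μ ≤ ENNReal.ofReal s)
    (hz : AEStronglyMeasurable z μ) (hz_le : eLpNorm z (ENNReal.ofReal q) μ ≤ ENNReal.ofReal t) :
    MemX μ q ω v ∧ XNorm μ q ω v ≤ ENNReal.ofReal s + ENNReal.ofReal t := by
  refine ⟨⟨w, z, hvwz, ⟨hw, hw_le.trans_lt ENNReal.ofReal_lt_top⟩,
    ⟨hz, hz_le.trans_lt ENNReal.ofReal_lt_top⟩⟩, (sInf_le ?_).trans (add_le_add hw_le hz_le)⟩
  exact ⟨w, z, hvwz, rfl⟩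

lemma eLpNorm_min_mul_div_le {a : ℝ} (ha : 0 ≤ a) (hv : ∀ x, 0 ≤ v x) (hω : ∀ x, 0 < ω x) :
    eLpNorm (fun x => min (v x) (a * ω x) / ω x) ⊤ μ ≤ ENNReal.ofReal a := by
  rw [eLpNorm_exponent_top]
  refine eLpNormEssSup_le_of_ae_bound (ae_of_all _ fun x => ?_)
  rw [Real.norm_of_nonneg (div_nonneg (le_min (hv x) (mul_nonneg ha (hω x).le)) (hω x).le),
    div_le_iff₀ (hω x)]
  exact min_le_right _ _

lemma exists_mem_Icc_forall_setIntegral_excess_rpow_le {p q C : ℝ} (hpq : p.HolderConjugate q)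
    (hC : 0 ≤ C) (hv_meas : Measurable v) (hω_meas : Measurable ω) (hv : ∀ x, 0 ≤ v x)
    (hω : ∀ x, 0 ≤ ω x) {A : ℕ → Set α} (hA_mono : Monotone A)
    (hA_meas : ∀ n, MeasurableSet (A n)) (hA_fin : ∀ n, μ (A n) ≠ ⊤)
    (hvA : ∀ n, ∀ x ∈ A n, v x ≤ n) (hωA : ∀ n, ∀ x ∈ A n, ω x ≤ n)
    (hbound : ∀ n, ∀ f : α → ℝ, (∀ x, 0 ≤ f x) → MemInter μ p ω f → Function.support f ⊆ A n →
      ∫ x, v x * f x ∂μ ≤ C * max (∫ x, ω x * f x ∂μ) (eLpNorm f (ENNReal.ofReal p) μ).toReal) :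
    ∃ a ∈ Icc 0 C, ∀ n, ∫ x in A n, excess v ω a x ^ q ∂μ ≤ (C - a) ^ q := by
  have hB_cont : ∀ n, ContinuousOn (fun a => ∫ x in A n, excess v ω a x ^ q ∂μ) (Ici 0) :=
    fun n => continuousOn_setIntegral_excess_rpow hv_meas hω_meas hv hω hpq.symm.nonneg
      (hA_meas n) (hA_fin n) (hvA n)
  have hI_cont : ∀ n, ContinuousOn
      (fun a => ∫ x in A n, ω x * excess v ω a x ^ (q - 1) ∂μ) (Ici 0) := fun n =>
    continuousOn_setIntegral_mul_excess_rpow hv_meas hω_meas hω_meas hv hω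
      hpq.symm.sub_one_pos.le (hA_meas n) (hA_fin n)
      (fun x hx => (abs_of_nonneg (hω x)).trans_le (hωA n x hx)) (hvA n)
  refine exists_mem_forall_le_of_le_succ isCompact_Icc
    (fun n => (hB_cont n).mono Icc_subset_Ici_self)
    ((continuous_const.sub continuous_id).rpow_const fun _ => Or.inr hpq.symm.nonneg).continuousOn
    (fun n a ha => ?_) fun n => exists_mem_Icc_le_sub_rpow hpq hC (hB_cont n) (hI_cont n)
      (fun a => integral_nonneg fun x => Real.rpow_nonneg (excess_nonneg a x) q)
      fun a ha => setIntegral_excess_rpow_add_le hpq hv_meas hω_meas hv hω ha (hA_meas n)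
        (hA_fin n) (hvA n) (hωA n) (hbound n)
  exact setIntegral_mono_set (integrableOn_excess_rpow hv_meas hω_meas hv hω ha.1
      hpq.symm.nonneg (hA_meas (n + 1)) (hA_fin (n + 1)) (hvA (n + 1)))
    (ae_of_all _ fun x => Real.rpow_nonneg (excess_nonneg a x) q)
    (Eventually.of_forall (hA_mono n.le_succ))

theorem memX_and_XNorm_le_of_exhaustion {p q C : ℝ} (hpq : p.HolderConjugate q) (hC : 0 ≤ C)
    (hv_meas : Measurable v) (hω_meas : Measurable ω) (hv : ∀ x, 0 ≤ v x) (hω : ∀ x, 0 < ω x)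
    {A : ℕ → Set α} (hA_mono : Monotone A) (hA_meas : ∀ n, MeasurableSet (A n))
    (hA_fin : ∀ n, μ (A n) ≠ ⊤) (hA_cover : ∀ x, ∃ n, x ∈ A n)
    (hvA : ∀ n, ∀ x ∈ A n, v x ≤ n) (hωA : ∀ n, ∀ x ∈ A n, ω x ≤ n)
    (hbound : ∀ n, ∀ f : α → ℝ, (∀ x, 0 ≤ f x) → MemInter μ p ω f → Function.support f ⊆ A n →
      ∫ x, v x * f x ∂μ ≤ C * max (∫ x, ω x * f x ∂μ) (eLpNorm f (ENNReal.ofReal p) μ).toReal) :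
    MemX μ q ω v ∧ XNorm μ q ω v ≤ ENNReal.ofReal C := by
  have hω0 : ∀ x, 0 ≤ ω x := fun x => (hω x).le
  obtain ⟨a, ha, hBa⟩ := exists_mem_Icc_forall_setIntegral_excess_rpow_le hpq hC hv_meas hω_meas
    hv hω0 hA_mono hA_meas hA_fin hvA hωA hbound
  have hZ_le := eLpNorm_le_of_forall_setIntegral_rpow_le
    (measurable_excess hv_meas hω_meas a).aestronglyMeasurable (excess_nonneg a)
    hpq.symm.pos (sub_nonneg.2 ha.2) hA_mono hA_meas hA_cover
    (fun n => integrableOn_excess_rpow hv_meas hω_meas hv hω0 ha.1 hpq.symm.nonneg (hA_meas n)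
      (hA_fin n) (hvA n)) hBa
  have hsplit := memX_and_XNorm_le (w := fun x => min (v x) (a * ω x)) (z := excess v ω a)
    (funext fun x => (min_add_excess a x).symm)
    ((hv_meas.min (measurable_const.mul hω_meas)).div hω_meas).aestronglyMeasurable
    (eLpNorm_min_mul_div_le ha.1 hv hω)
    (measurable_excess hv_meas hω_meas a).aestronglyMeasurable hZ_le
  rwa [← ENNReal.ofReal_add ha.1 (sub_nonneg.2 ha.2), add_sub_cancel] at hsplit

end WeightedSumSpace

open WeightedSumSpace

theorem stmt6_general (h : ℕ) (Ω : Set (Fin h → ℝ))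
    (ω : (Fin h → ℝ) → ℝ) (hω_meas : Measurable ω) (hω : ∀ x, 1 ≤ ω x)
    (p q : ℝ) (hp : 1 < p) (hpq : 1 / p + 1 / q = 1)
    (v : (Fin h → ℝ) → ℝ) (hv_meas : Measurable v) (hv : ∀ x, 0 ≤ v x)
    (C : ℝ) (hC : 0 ≤ C)
    (hbound : ∀ f : (Fin h → ℝ) → ℝ, (∀ x, 0 ≤ f x) →
      MemInter (volume.restrict Ω) p ω f →
      Bornology.IsBounded (Function.support f) →
      (∫ x, v x * f x ∂(volume.restrict Ω)) ≤
        C * max (∫ x, ω x * f x ∂(volume.restrict Ω))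
          ((eLpNorm f (ENNReal.ofReal p) (volume.restrict Ω)).toReal)) :
    MemX (volume.restrict Ω) q ω v ∧
      XNorm (volume.restrict Ω) q ω v ≤ ENNReal.ofReal C := by
  have hpq' : p.HolderConjugate q :=
    Real.holderConjugate_iff.2 ⟨hp, by simpa only [one_div] using hpq⟩
  exact memX_and_XNorm_le_of_exhaustion hpq' hC hv_meas hω_meas hv
    (fun x => one_pos.trans_le (hω x)) (monotone_truncationSet 0)
    (measurableSet_truncationSet hv_meas hω_meas 0) (measure_truncationSet_ne_top 0)
    (exists_mem_truncationSet 0) (fun n x hx => hx.1.1) (fun n x hx => hx.1.2)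
    fun n f hf0 hf hsupp => hbound f hf0 hf ((isBounded_truncationSet 0 n).subset hsupp)

/-- a nonnegative `v` whose pairing with every nonnegative
boundedly supported `f ∈ L^p ∩ L^1_ω` is controlled by
`C · max(∫ ω f, ‖f‖_{L^p})` belongs to `X_ω^q(Ω)` with norm at most `C`. -/
theorem stmt6 (h : ℕ) (Ω : Set (Fin h → ℝ)) (hΩ : IsOpen Ω)
    (ω : (Fin h → ℝ) → ℝ) (hω_meas : Measurable ω) (hω : ∀ x, 1 ≤ ω x)
    (p q : ℝ) (hp : 1 < p) (hq : 1 < q) (hpq : 1 / p + 1 / q = 1)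
    (v : (Fin h → ℝ) → ℝ) (hv_meas : Measurable v) (hv : ∀ x, 0 ≤ v x)
    (C : ℝ) (hC : 0 ≤ C)
    (hbound : ∀ f : (Fin h → ℝ) → ℝ, (∀ x, 0 ≤ f x) →
      MemInter (volume.restrict Ω) p ω f →
      Bornology.IsBounded (Function.support f) →
      (∫ x, v x * f x ∂(volume.restrict Ω)) ≤
        C * max (∫ x, ω x * f x ∂(volume.restrict Ω))
          ((eLpNorm f (ENNReal.ofReal p) (volume.restrict Ω)).toReal)) :
    MemX (volume.restrict Ω) q ω v ∧
      XNorm (volume.restrict Ω) q ω v ≤ ENNReal.ofReal C :=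
  stmt6_general h Ω ω hω_meas hω p q hp hpq v hv_meas hv C hC hbound
end

section
/- Let D ⊆ (0,1) be dense and t ↦ u_t an increasing map from D to L⁰(Ω, 𝔪). Then for every t ∈ (0,1] the left limit u_t⁻ = lim_{s∈D, s↑t} u_s exists in measure, for every t ∈ [0,1) the right limit u_t⁺ exists in measure, for t ∈ D one has u_t⁻ ≤ u_t ≤ u_t⁺, and the set {t ∈ D : u_t⁻ ≠ u_t⁺} is at most countable. -/
/-!
The left limit `u_t⁻` is the a.e. least upper bound of `{u_s : s ∈ D, s < t}`, realised as the
pointwise supremum along a strictly increasing sequence `s_n ↑ t` in `D`. Along that sequence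
`ζ ∘ u_{s_n} → ζ ∘ u_t⁻` a.e., hence in measure on every set of finite measure, and every
`s ∈ D` close enough to `t` from the left is squeezed a.e. between some `u_{s_n}` and `u_t⁻`.
Right limits follow by reversing both the order of the index and the sign of `u`.
For the jump set, fix a finite measure `ν` with the same null sets as `𝔪`: the open intervals
`(∫ ζ ∘ u_t⁻ dν, ∫ ζ ∘ u_t⁺ dν)` are nonempty at jumps and pairwise disjoint, so there are
at most countably many jumps.
-/

open MeasureTheory Filter

/-- A fixed increasing homeomorphism `ℝ̄ → [-1/2, 1/2]` used to define
convergence in measure for extended-real-valued functions. -/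
noncomputable def zeta (y : EReal) : ℝ :=
  if y = ⊤ then 1 / 2 else if y = ⊥ then -1 / 2
  else y.toReal / (2 * Real.sqrt (1 + y.toReal ^ 2))

open Set Topology ENNReal

section Zeta

lemma zeta_coe (r : ℝ) : zeta r = r / (2 * √(1 + r ^ 2)) := by
  simp [zeta]

lemma zeta_top : zeta ⊤ = 1 / 2 := by
  simp [zeta]

lemma zeta_bot : zeta ⊥ = -(1 / 2) := by
  norm_num [zeta]

lemma zeta_neg (y : EReal) : zeta (-y) = -zeta y := by
  induction y using EReal.rec with
  | bot => rw [EReal.neg_bot, zeta_top, zeta_bot, neg_neg]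
  | coe r => rw [← EReal.coe_neg, zeta_coe, zeta_coe, neg_sq, neg_div]
  | top => rw [EReal.neg_top, zeta_top, zeta_bot]

lemma abs_zeta_coe_lt (r : ℝ) : |zeta r| < 1 / 2 := by
  have hs : 0 < √(1 + r ^ 2) := by positivity
  have hr : |r| < √(1 + r ^ 2) := by
    rw [Real.lt_sqrt (abs_nonneg r), sq_abs]
    linarith
  rw [zeta_coe, abs_div, abs_of_pos (mul_pos two_pos hs), div_lt_iff₀ (mul_pos two_pos hs)]
  linarith

lemma abs_zeta_le (y : EReal) : |zeta y| ≤ 1 / 2 := by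
  induction y using EReal.rec with
  | bot => norm_num [zeta_bot]
  | coe r => exact (abs_zeta_coe_lt r).le
  | top => norm_num [zeta_top]

lemma zeta_coe_strictMono : StrictMono fun r : ℝ => zeta r := by
  refine strictMono_of_odd_strictMonoOn_nonneg (fun r => by simpa using zeta_neg r) ?_
  rintro r (hr : 0 ≤ r) r' - hrr'
  have hs : 0 < √(1 + r ^ 2) := by positivity
  have hs' : 0 < √(1 + r' ^ 2) := by positivity
  simp only [zeta_coe]
  rw [div_lt_div_iff₀ (mul_pos two_pos hs) (mul_pos two_pos hs')]
  have hsq : (r * √(1 + r' ^ 2)) ^ 2 < (r' * √(1 + r ^ 2)) ^ 2 := by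
    rw [mul_pow, mul_pow, Real.sq_sqrt (by positivity), Real.sq_sqrt (by positivity)]
    nlinarith
  nlinarith [lt_of_pow_lt_pow_left₀ 2 (mul_nonneg (hr.trans hrr'.le) hs.le) hsq]

lemma zeta_strictMono : StrictMono zeta := by
  intro y y' h
  induction y using EReal.rec with
  | bot =>
    induction y' using EReal.rec with
    | bot => exact absurd h (lt_irrefl _)
    | coe r => rw [zeta_bot]; linarith [(abs_lt.1 (abs_zeta_coe_lt r)).1]
    | top => norm_num [zeta_bot, zeta_top]
  | coe r =>
    induction y' using EReal.rec with
    | bot => exact absurd h not_lt_bot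
    | coe r' => exact zeta_coe_strictMono (EReal.coe_lt_coe_iff.1 h)
    | top => rw [zeta_top]; linarith [(abs_lt.1 (abs_zeta_coe_lt r)).2]
  | top => exact absurd h not_top_lt

lemma zeta_monotone : Monotone zeta :=
  zeta_strictMono.monotone

lemma zeta_coe_inverse {y : ℝ} (hy : |y| < 1 / 2) :
    zeta (2 * y / √(1 - 4 * y ^ 2) : ℝ) = y := by
  have hc : 0 < 1 - 4 * y ^ 2 := by nlinarith [sq_abs y, abs_nonneg y]
  set c := √(1 - 4 * y ^ 2)
  have hs : 0 < c := Real.sqrt_pos.2 hc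
  have h1 : 1 + (2 * y / c) ^ 2 = (1 / c) ^ 2 := by
    rw [div_pow, div_pow, Real.sq_sqrt hc.le, eq_div_iff hc.ne', add_mul,
      div_mul_cancel₀ _ hc.ne']
    ring
  rw [zeta_coe, h1, Real.sqrt_sq (by positivity)]
  field_simp

lemma surjOn_zeta : SurjOn zeta univ (Icc (-(1 / 2)) (1 / 2)) := by
  intro y hy
  rcases hy.1.eq_or_lt with rfl | hlo
  · exact ⟨⊥, mem_univ _, zeta_bot⟩
  rcases hy.2.eq_or_lt with rfl | hhi
  · exact ⟨⊤, mem_univ _, zeta_top⟩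
  exact ⟨_, mem_univ _, zeta_coe_inverse (abs_lt.2 ⟨hlo, hhi⟩)⟩

lemma continuous_zeta : Continuous zeta := by
  have hmaps (y : EReal) : zeta y ∈ Icc (-(1 / 2)) (1 / 2) := abs_le.1 (abs_zeta_le y)
  refine continuous_subtype_val.comp (f := codRestrict zeta _ hmaps) ?_
  refine Monotone.continuous_of_surjective (fun y y' h => zeta_monotone h) ?_
  rintro ⟨y, hy⟩
  obtain ⟨z, -, rfl⟩ := surjOn_zeta hy
  exact ⟨z, rfl⟩

end Zeta

section Order

variable {ι : Type*} [LinearOrder ι]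

theorem Set.countable_of_forall_lt_of_forall_le {B : Set ι} {f g : ι → ℝ}
    (hfg : ∀ t ∈ B, f t < g t) (hgf : ∀ s ∈ B, ∀ t ∈ B, s < t → g s ≤ f t) : B.Countable := by
  have hdisj {s t} (hs : s ∈ B) (ht : t ∈ B) (hst : s < t) :
      Disjoint (Ioo (f s) (g s)) (Ioo (f t) (g t)) :=
    disjoint_left.2 fun _ hx hx' => lt_asymm (hx.2.trans_le (hgf s hs t ht hst)) hx'.1
  refine PairwiseDisjoint.countable_of_isOpen (s := fun t => Ioo (f t) (g t)) ?_
    (fun _ _ => isOpen_Ioo) fun t ht => nonempty_Ioo.2 (hfg t ht)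
  intro s hs t ht hst
  rcases hst.lt_or_gt with h | h
  exacts [hdisj hs ht h, (hdisj ht hs h).symm]

variable [DenselyOrdered ι] [TopologicalSpace ι] [OrderTopology ι] {D : Set ι}

lemma nonempty_inter_Ioo_of_subset_closure {a b : ι} (hab : a < b)
    (hD : Ioo a b ⊆ closure D) : (D ∩ Ioo a b).Nonempty :=
  let ⟨c, hc⟩ := nonempty_Ioo.2 hab
  (closure_inter_open_nonempty_iff isOpen_Ioo).1 ⟨c, hD hc, hc⟩

lemma isLUB_inter_Iio_of_subset_closure {a t : ι} (hat : a < t) (hD : Ioo a t ⊆ closure D) :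
    IsLUB (D ∩ Iio t) t := by
  refine ⟨fun s hs => hs.2.le, fun b hb => le_of_forall_lt fun c hc => ?_⟩
  obtain ⟨d, hdD, hd, hdt⟩ := nonempty_inter_Ioo_of_subset_closure (max_lt hat hc)
    ((Ioo_subset_Ioo_left (le_max_left a c)).trans hD)
  exact (le_max_right a c).trans_lt hd |>.trans_le (hb ⟨hdD, hdt⟩)

lemma isGLB_inter_Ioi_of_subset_closure {b t : ι} (htb : t < b) (hD : Ioo t b ⊆ closure D) :
    IsGLB (D ∩ Ioi t) t := by
  refine ⟨fun s hs => hs.2.le, fun a ha => le_of_forall_gt fun c hc => ?_⟩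
  obtain ⟨d, hdD, htd, hd⟩ := nonempty_inter_Ioo_of_subset_closure (lt_min htb hc)
    ((Ioo_subset_Ioo_right (min_le_left b c)).trans hD)
  exact (ha ⟨hdD, htd⟩).trans_lt (hd.trans_le (min_le_right b c))

end Order

section Measure

variable {α : Type*} [MeasurableSpace α] {μ : Measure α}

theorem MeasureTheory.TendstoInMeasure.neg {ι E : Type*} [SeminormedAddCommGroup E]
    {l : Filter ι} {f : ι → α → E} {g : α → E} (h : TendstoInMeasure μ f l g) :
    TendstoInMeasure μ (fun i x => -f i x) l (fun x => -g x) := by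
  simpa only [TendstoInMeasure, edist_neg_neg] using h

theorem MeasureTheory.TendstoInMeasure.of_eventually_between {ι κ : Type*} {l : Filter ι}
    {l' : Filter κ} [l'.NeBot] {f : κ → α → ℝ} {g : α → ℝ} {h : ι → α → ℝ}
    (hf : TendstoInMeasure μ f l' g) (hfh : ∀ n, ∀ᶠ i in l, f n ≤ᵐ[μ] h i ∧ h i ≤ᵐ[μ] g) :
    TendstoInMeasure μ h l g := by
  intro ε hε
  rw [ENNReal.tendsto_nhds_zero]
  intro δ hδ
  obtain ⟨n, hn⟩ := (ENNReal.tendsto_nhds_zero.1 (hf ε hε) δ hδ).exists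
  filter_upwards [hfh n] with i ⟨hfi, hig⟩
  refine (measure_mono_ae ?_).trans hn
  filter_upwards [hfi, hig] with x hfx hgx (hx : ε ≤ edist (h i x) (g x))
  refine hx.trans ?_
  rw [edist_dist, edist_dist]
  exact ENNReal.ofReal_le_ofReal (Real.dist_right_le_of_mem_uIcc (Icc_subset_uIcc ⟨hfx, hgx⟩))

theorem MeasureTheory.TendstoInMeasure.tendsto_measure_inter_le_abs_sub {ι : Type*}
    {l : Filter ι} {f : ι → α → ℝ} {g : α → ℝ} {F : Set α} (hF : MeasurableSet F)
    (h : TendstoInMeasure (μ.restrict F) f l g) {ε : ℝ} (hε : 0 < ε) :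
    Tendsto (fun i => μ (F ∩ {x | ε ≤ |f i x - g x|})) l (𝓝 0) :=
  (tendstoInMeasure_iff_dist.1 h ε hε).congr fun i => by
    rw [Measure.restrict_apply' hF, inter_comm]
    rfl

lemma integrable_zeta_comp [IsFiniteMeasure μ] {v : α → EReal} (hv : Measurable v) :
    Integrable (fun x => zeta (v x)) μ :=
  .of_bound (zeta_monotone.measurable.comp hv).aestronglyMeasurable (1 / 2)
    (ae_of_all _ fun x => abs_zeta_le (v x))

lemma integral_zeta_lt_of_ae_le [IsFiniteMeasure μ] {v w : α → EReal} (hv : Measurable v)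
    (hw : Measurable w) (hle : v ≤ᵐ[μ] w) (hne : ¬v =ᵐ[μ] w) :
    ∫ x, zeta (v x) ∂μ < ∫ x, zeta (w x) ∂μ := by
  rw [← sub_pos, ← integral_sub (integrable_zeta_comp hw) (integrable_zeta_comp hv)]
  refine (integral_pos_iff_support_of_nonneg_ae ?_
    ((integrable_zeta_comp hw).sub (integrable_zeta_comp hv))).2 ?_
  · filter_upwards [hle] with x hx using sub_nonneg.2 (zeta_monotone hx)
  have hlt : {x | v x < w x} ⊆ Function.support fun x => zeta (w x) - zeta (v x) :=
    fun x hx => sub_ne_zero.2 (zeta_strictMono hx).ne'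
  refine (pos_iff_ne_zero.2 fun h0 => hne ?_).trans_le (measure_mono hlt)
  filter_upwards [hle, measure_eq_zero_iff_ae_notMem.1 h0] with x h1 h2
  exact h1.antisymm (not_lt.1 h2)

variable {ι : Type*} [LinearOrder ι]

theorem countable_setOf_not_ae_eq [SFinite μ] {B : Set ι} {v w : ι → α → EReal}
    (hv : ∀ t ∈ B, Measurable (v t)) (hw : ∀ t ∈ B, Measurable (w t))
    (hvw : ∀ t ∈ B, v t ≤ᵐ[μ] w t) (hwv : ∀ s ∈ B, ∀ t ∈ B, s < t → w s ≤ᵐ[μ] v t) :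
    {t ∈ B | ¬v t =ᵐ[μ] w t}.Countable := by
  obtain ⟨ν, _, hμν, hνμ⟩ := exists_isFiniteMeasure_absolutelyContinuous μ
  refine countable_of_forall_lt_of_forall_le (f := fun t => ∫ x, zeta (v t x) ∂ν)
    (g := fun t => ∫ x, zeta (w t x) ∂ν) (fun t ht => ?_) fun s hs t ht hst => ?_
  · exact integral_zeta_lt_of_ae_le (hv t ht.1) (hw t ht.1) (hνμ.ae_le (hvw t ht.1))
      fun h => ht.2 (hμν.ae_eq h)
  · refine integral_mono_ae (integrable_zeta_comp (hw s hs.1))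
      (integrable_zeta_comp (hv t ht.1)) ?_
    filter_upwards [hνμ.ae_le (hwv s hs.1 t ht.1 hst)] with x hx using zeta_monotone hx

def IsAELUB (μ : Measure α) (S : Set ι) (u : ι → α → EReal) (v : α → EReal) : Prop :=
  (∀ s ∈ S, u s ≤ᵐ[μ] v) ∧ ∀ w, (∀ s ∈ S, u s ≤ᵐ[μ] w) → v ≤ᵐ[μ] w

def IsAEGLB (μ : Measure α) (S : Set ι) (u : ι → α → EReal) (v : α → EReal) : Prop :=
  (∀ s ∈ S, v ≤ᵐ[μ] u s) ∧ ∀ w, (∀ s ∈ S, w ≤ᵐ[μ] u s) → w ≤ᵐ[μ] v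

variable [TopologicalSpace ι] [OrderTopology ι] {u : ι → α → ℝ}

theorem isAELUB_iSup_of_tendsto {S : Set ι} {t : ι} (hS : IsLUB S t) (htS : t ∉ S)
    (hmono : ∀ s ∈ S, ∀ s' ∈ S, s ≤ s' → u s ≤ᵐ[μ] u s')
    {σ : ℕ → ι} (hσS : ∀ n, σ n ∈ S) (hσ : Tendsto σ atTop (𝓝 t)) :
    IsAELUB μ S (fun s x => (u s x : EReal)) (fun x => ⨆ n, (u (σ n) x : EReal)) := by
  refine ⟨fun s hs => ?_, fun w hw => ?_⟩
  · have hst : s < t := (hS.1 hs).lt_of_ne (ne_of_mem_of_not_mem hs htS)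
    obtain ⟨n, hn⟩ := (hσ.eventually (lt_mem_nhds hst)).exists
    filter_upwards [hmono s hs _ (hσS n) hn.le] with x hx
    exact (EReal.coe_le_coe_iff.2 hx).trans (le_iSup (fun n => (u (σ n) x : EReal)) n)
  · filter_upwards [ae_all_iff.2 fun n => hw _ (hσS n)] with x hx
    exact iSup_le hx

variable [FirstCountableTopology ι]

theorem exists_isAELUB_tendstoInMeasure_zeta {S : Set ι} {t : ι} (hS : IsLUB S t)
    (htS : t ∉ S) (hSne : S.Nonempty) (hmeas : ∀ s ∈ S, Measurable (u s))
    (hmono : ∀ s ∈ S, ∀ s' ∈ S, s ≤ s' → u s ≤ᵐ[μ] u s') :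
    ∃ v : α → EReal, Measurable v ∧ IsAELUB μ S (fun s x => (u s x : EReal)) v ∧
      ∀ F, MeasurableSet F → μ F ≠ ∞ →
        TendstoInMeasure (μ.restrict F) (fun s x => zeta (u s x)) (𝓝[S] t)
          (fun x => zeta (v x)) := by
  obtain ⟨σ, hσmono, hσt, hσlim, hσS⟩ := hS.exists_seq_strictMono_tendsto_of_notMem htS hSne
  have hv := isAELUB_iSup_of_tendsto hS htS hmono hσS hσlim
  refine ⟨_, Measurable.iSup fun n => (hmeas _ (hσS n)).coe_real_ereal, hv, fun F hF hFfin => ?_⟩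
  have : IsFiniteMeasure (μ.restrict F) := isFiniteMeasure_restrict.2 hFfin
  have hσu : ∀ᵐ x ∂μ, Monotone fun n => (u (σ n) x : EReal) := by
    filter_upwards [ae_all_iff.2 fun n =>
      hmono _ (hσS n) _ (hσS (n + 1)) (hσmono n.lt_succ_self).le] with x hx
    exact monotone_nat_of_le_succ fun n => EReal.coe_le_coe_iff.2 (hx n)
  refine TendstoInMeasure.of_eventually_between (l' := atTop)
    (f := fun n x => zeta (u (σ n) x)) ?_ fun n => ?_
  · refine tendstoInMeasure_of_tendsto_ae (fun n => ?_) (ae_restrict_of_ae ?_)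
    · exact (zeta_monotone.measurable.comp (hmeas _ (hσS n)).coe_real_ereal).aestronglyMeasurable
    filter_upwards [hσu] with x hx
    exact (continuous_zeta.tendsto _).comp (tendsto_atTop_iSup hx)
  · filter_upwards [self_mem_nhdsWithin, nhdsWithin_le_nhds (lt_mem_nhds (hσt n))]
      with s hs hσs
    refine ⟨ae_restrict_of_ae ?_, ae_restrict_of_ae ?_⟩
    · filter_upwards [hmono _ (hσS n) s hs hσs.le] with x hx
      exact zeta_monotone (EReal.coe_le_coe_iff.2 hx)
    · filter_upwards [hv.1 s hs] with x hx
      exact zeta_monotone hx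

theorem exists_isAEGLB_tendstoInMeasure_zeta {S : Set ι} {t : ι} (hS : IsGLB S t)
    (htS : t ∉ S) (hSne : S.Nonempty) (hmeas : ∀ s ∈ S, Measurable (u s))
    (hmono : ∀ s ∈ S, ∀ s' ∈ S, s ≤ s' → u s ≤ᵐ[μ] u s') :
    ∃ v : α → EReal, Measurable v ∧ IsAEGLB μ S (fun s x => (u s x : EReal)) v ∧
      ∀ F, MeasurableSet F → μ F ≠ ∞ →
        TendstoInMeasure (μ.restrict F) (fun s x => zeta (u s x)) (𝓝[S] t)
          (fun x => zeta (v x)) := by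
  obtain ⟨v, hvmeas, hv, hvlim⟩ := exists_isAELUB_tendstoInMeasure_zeta (ι := ιᵒᵈ) (μ := μ)
    hS.dual htS hSne (u := fun s x => -u (OrderDual.ofDual s) x) (fun s hs => (hmeas s hs).neg)
    (fun s hs s' hs' hss' => (hmono s' hs' s hs hss').mono fun x hx => neg_le_neg hx)
  refine ⟨fun x => -v x, hvmeas.neg, ⟨fun s hs => ?_, fun w hw => ?_⟩, fun F hF hFfin => ?_⟩
  · filter_upwards [hv.1 s hs] with x hx
    exact EReal.neg_le.1 (by rwa [← EReal.coe_neg])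
  · filter_upwards [hv.2 (fun x => -w x)
      (fun s hs => (hw s hs).mono fun x hx => by
        beta_reduce; rw [EReal.coe_neg]; exact EReal.neg_le_neg_iff.2 hx)] with x hx
    exact EReal.le_neg.1 hx
  · have h := (hvlim F hF hFfin).neg
    simp only [EReal.coe_neg, zeta_neg, neg_neg] at h
    simp only [zeta_neg]
    exact h

variable [DenselyOrdered ι] {D : Set ι}

theorem exists_isAELUB_inter_Iio_tendstoInMeasure_zeta {a t : ι} (hat : a < t)
    (hD : Ioo a t ⊆ closure D) (hmeas : ∀ s ∈ D, Measurable (u s))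
    (hmono : ∀ s ∈ D, ∀ s' ∈ D, s ≤ s' → u s ≤ᵐ[μ] u s') :
    ∃ v : α → EReal, Measurable v ∧ IsAELUB μ (D ∩ Iio t) (fun s x => (u s x : EReal)) v ∧
      ∀ F, MeasurableSet F → μ F ≠ ∞ →
        TendstoInMeasure (μ.restrict F) (fun s x => zeta (u s x)) (𝓝[D ∩ Iio t] t)
          (fun x => zeta (v x)) :=
  exists_isAELUB_tendstoInMeasure_zeta (isLUB_inter_Iio_of_subset_closure hat hD)
    (fun h => lt_irrefl t h.2)
    ((nonempty_inter_Ioo_of_subset_closure hat hD).mono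
      (inter_subset_inter_right _ Ioo_subset_Iio_self))
    (fun s hs => hmeas s hs.1) fun s hs s' hs' => hmono s hs.1 s' hs'.1

theorem exists_isAEGLB_inter_Ioi_tendstoInMeasure_zeta {b t : ι} (htb : t < b)
    (hD : Ioo t b ⊆ closure D) (hmeas : ∀ s ∈ D, Measurable (u s))
    (hmono : ∀ s ∈ D, ∀ s' ∈ D, s ≤ s' → u s ≤ᵐ[μ] u s') :
    ∃ v : α → EReal, Measurable v ∧ IsAEGLB μ (D ∩ Ioi t) (fun s x => (u s x : EReal)) v ∧
      ∀ F, MeasurableSet F → μ F ≠ ∞ →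
        TendstoInMeasure (μ.restrict F) (fun s x => zeta (u s x)) (𝓝[D ∩ Ioi t] t)
          (fun x => zeta (v x)) :=
  exists_isAEGLB_tendstoInMeasure_zeta (isGLB_inter_Ioi_of_subset_closure htb hD)
    (fun h => lt_irrefl t h.2)
    ((nonempty_inter_Ioo_of_subset_closure htb hD).mono
      (inter_subset_inter_right _ Ioo_subset_Ioi_self))
    (fun s hs => hmeas s hs.1) fun s hs s' hs' => hmono s hs.1 s' hs'.1

end Measure

theorem stmt8_general {α : Type*} [MeasurableSpace α]
    (μ : Measure α) [SigmaFinite μ]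
    (D : Set ℝ) (hD : D ⊆ Set.Ioo 0 1) (hdense : Set.Ioo (0:ℝ) 1 ⊆ closure D)
    (u : ℝ → α → ℝ) (hmeas : ∀ t ∈ D, Measurable (u t))
    (hmono : ∀ s ∈ D, ∀ t ∈ D, s ≤ t → ∀ᵐ x ∂μ, u s x ≤ u t x) :
    ∃ um up : ℝ → α → EReal,
      (∀ t ∈ Set.Ioc (0:ℝ) 1, ∀ F : Set α, MeasurableSet F → μ F < ⊤ →
        ∀ ε : ℝ, 0 < ε →
        Tendsto (fun s => μ (F ∩ {x | ε ≤ |zeta ((u s x : EReal)) - zeta (um t x)|}))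
          (nhdsWithin t (D ∩ Set.Iio t)) (nhds 0)) ∧
      (∀ t ∈ Set.Ico (0:ℝ) 1, ∀ F : Set α, MeasurableSet F → μ F < ⊤ →
        ∀ ε : ℝ, 0 < ε →
        Tendsto (fun s => μ (F ∩ {x | ε ≤ |zeta ((u s x : EReal)) - zeta (up t x)|}))
          (nhdsWithin t (D ∩ Set.Ioi t)) (nhds 0)) ∧
      (∀ t ∈ D, ∀ᵐ x ∂μ, um t x ≤ (u t x : EReal) ∧ (u t x : EReal) ≤ up t x) ∧
      Set.Countable {t ∈ D | ¬ (um t =ᵐ[μ] up t)} := by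
  have hdense_Ioo {a b : ℝ} (ha : 0 ≤ a) (hb : b ≤ 1) : Ioo a b ⊆ closure D :=
    (Ioo_subset_Ioo ha hb).trans hdense
  choose! um hum_meas hum hum_lim using fun t (ht : t ∈ Ioc (0 : ℝ) 1) =>
    exists_isAELUB_inter_Iio_tendstoInMeasure_zeta (μ := μ) ht.1 (hdense_Ioo le_rfl ht.2) hmeas hmono
  choose! up hup_meas hup hup_lim using fun t (ht : t ∈ Ico (0 : ℝ) 1) =>
    exists_isAEGLB_inter_Ioi_tendstoInMeasure_zeta (μ := μ) ht.2 (hdense_Ioo ht.1 le_rfl) hmeas hmono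
  have hIoc {t} (ht : t ∈ D) : t ∈ Ioc (0 : ℝ) 1 := Ioo_subset_Ioc_self (hD ht)
  have hIco {t} (ht : t ∈ D) : t ∈ Ico (0 : ℝ) 1 := Ioo_subset_Ico_self (hD ht)
  have hbetween : ∀ t ∈ D, ∀ᵐ x ∂μ, um t x ≤ (u t x : EReal) ∧ (u t x : EReal) ≤ up t x := by
    intro t ht
    filter_upwards [(hum t (hIoc ht)).2 _ fun s hs => (hmono s hs.1 t ht hs.2.le).mono
        fun x hx => EReal.coe_le_coe_iff.2 hx,
      (hup t (hIco ht)).2 _ fun s hs => (hmono t ht s hs.1 hs.2.le).mono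
        fun x hx => EReal.coe_le_coe_iff.2 hx] with x h1 h2 using ⟨h1, h2⟩
  refine ⟨um, up, fun t ht F hF hFfin ε hε => ?_, fun t ht F hF hFfin ε hε => ?_, hbetween, ?_⟩
  · exact (hum_lim t ht F hF hFfin.ne).tendsto_measure_inter_le_abs_sub hF hε
  · exact (hup_lim t ht F hF hFfin.ne).tendsto_measure_inter_le_abs_sub hF hε
  refine countable_setOf_not_ae_eq (fun t ht => hum_meas t (hIoc ht))
    (fun t ht => hup_meas t (hIco ht)) (fun t ht => ?_) fun s hs t ht hst => ?_
  · filter_upwards [hbetween t ht] with x hx using hx.1.trans hx.2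
  · obtain ⟨r, hr, hsr, hrt⟩ := nonempty_inter_Ioo_of_subset_closure hst
      (hdense_Ioo (hIco hs).1 (hIoc ht).2)
    filter_upwards [(hup s (hIco hs)).1 r ⟨hr, hsr⟩, (hum t (hIoc ht)).1 r ⟨hr, hrt⟩]
      with x h1 h2 using h1.trans h2

/-- an increasing map `t ↦ u_t` from a dense `D ⊆ (0,1)` to
`L⁰(Ω,𝔪)` has one-sided limits in measure `u_t⁻` (for `t ∈ (0,1]`) and
`u_t⁺` (for `t ∈ [0,1)`), with `u_t⁻ ≤ u_t ≤ u_t⁺` on `D` and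
`u_t⁻ = u_t⁺` off an at most countable set. -/
theorem stmt8 {α : Type*} [MeasurableSpace α] [TopologicalSpace α]
    [PolishSpace α] [BorelSpace α]
    (μ : Measure α) [SigmaFinite μ]
    (D : Set ℝ) (hD : D ⊆ Set.Ioo 0 1) (hdense : Set.Ioo (0:ℝ) 1 ⊆ closure D)
    (u : ℝ → α → ℝ) (hmeas : ∀ t ∈ D, Measurable (u t))
    (hmono : ∀ s ∈ D, ∀ t ∈ D, s ≤ t → ∀ᵐ x ∂μ, u s x ≤ u t x) :
    ∃ um up : ℝ → α → EReal,
      (∀ t ∈ Set.Ioc (0:ℝ) 1, ∀ F : Set α, MeasurableSet F → μ F < ⊤ →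
        ∀ ε : ℝ, 0 < ε →
        Tendsto (fun s => μ (F ∩ {x | ε ≤ |zeta ((u s x : EReal)) - zeta (um t x)|}))
          (nhdsWithin t (D ∩ Set.Iio t)) (nhds 0)) ∧
      (∀ t ∈ Set.Ico (0:ℝ) 1, ∀ F : Set α, MeasurableSet F → μ F < ⊤ →
        ∀ ε : ℝ, 0 < ε →
        Tendsto (fun s => μ (F ∩ {x | ε ≤ |zeta ((u s x : EReal)) - zeta (up t x)|}))
          (nhdsWithin t (D ∩ Set.Ioi t)) (nhds 0)) ∧
      (∀ t ∈ D, ∀ᵐ x ∂μ, um t x ≤ (u t x : EReal) ∧ (u t x : EReal) ≤ up t x) ∧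
      Set.Countable {t ∈ D | ¬ (um t =ᵐ[μ] up t)} :=
  stmt8_general μ D hD hdense u hmeas hmono
end

section
/- If β ∈ X^q(Q) = L^q(Q) + L^∞_{1/κ}(Q) with κ(x) = 1 + |x|², then the map t ↦ B(t,·), where B(t,x) = ∫_{1/2}^t β(s,x) ds, is (1/p)-Hölder continuous from [0,1] into X^q(ℝᵈ); indeed ‖B(t,·) - B(s,·)‖_{X^q(ℝᵈ)} ≤ (t-s)^{1/p} ‖β‖_{X^q(Q)} for 0 ≤ s ≤ t ≤ 1. -/
/-!
Fix a splitting `β = w + z` with `A = ‖w / κ‖_∞ < ∞`. The splittings in the infimum defining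
`XNorm` are arbitrary functions, so `w` is replaced by the truncation
`g = max (-A κ) (min β (A κ))`, which is measurable, satisfies `|g| ≤ A κ` everywhere and
`|β - g| ≤ |z|` almost everywhere. Integrating in time over an interval of length `ℓ ≤ 1`,
the `g`-part gains the factor `ℓ ≤ ℓ ^ (1 - 1/q)` in the weighted sup norm, and Hölder's inequality
in time followed by Tonelli gives `‖∫ (β - g)‖_{L^q} ≤ ℓ ^ (1 - 1/q) ‖z‖_{L^q}`. Take the infimum
over splittings and use `1 - 1/q = 1/p`.
-/

open MeasureTheory

/-- The space-time cylinder `Q = (0,1) × ℝᵈ`. -/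
def Qset (d : ℕ) : Set (ℝ × (Fin d → ℝ)) := Set.Ioo (0:ℝ) 1 ×ˢ Set.univ

open scoped ENNReal

lemma abs_max_neg_min_le {b M : ℝ} (hM : 0 ≤ M) : |max (-M) (min b M)| ≤ M := by
  grind [abs_le]

lemma abs_sub_max_neg_min_le {b w M : ℝ} (hw : |w| ≤ M) :
    |b - max (-M) (min b M)| ≤ |b - w| := by
  grind [abs_le]

section XNorm

variable {α : Type*} [MeasurableSpace α] {μ : Measure α} {q : ℝ} {ω v w : α → ℝ}

lemma XNorm_le_of_eq_add {z : α → ℝ} (h : v = w + z) :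
    XNorm μ q ω v ≤ eLpNorm (fun x => w x / ω x) ⊤ μ + eLpNorm z (ENNReal.ofReal q) μ :=
  sInf_le ⟨w, z, h, rfl⟩

lemma XNorm_zero : XNorm μ q ω 0 = 0 :=
  nonpos_iff_eq_zero.1 <| (XNorm_le_of_eq_add (zero_add 0).symm).trans_eq <| by simp [← Pi.zero_def]

lemma XNorm_mono_measure {ν : Measure α} (hμν : μ ≤ ν) : XNorm μ q ω v ≤ XNorm ν q ω v :=
  le_sInf fun _ ⟨_, _, h, hc⟩ => hc ▸ (XNorm_le_of_eq_add h).trans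
    (add_le_add (eLpNorm_mono_measure _ hμν) (eLpNorm_mono_measure _ hμν))

lemma le_mul_XNorm {a C : ℝ≥0∞} (hC₀ : C ≠ 0) (hC : C ≠ ⊤)
    (h : ∀ w z : α → ℝ, v = w + z → eLpNorm (fun x => w x / ω x) ⊤ μ ≠ ⊤ →
      a ≤ C * (eLpNorm (fun x => w x / ω x) ⊤ μ + eLpNorm z (ENNReal.ofReal q) μ)) :
    a ≤ C * XNorm μ q ω v := by
  rw [mul_comm, ← ENNReal.div_le_iff hC₀ hC]
  refine le_sInf ?_
  rintro _ ⟨w, z, hv, rfl⟩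
  rw [ENNReal.div_le_iff hC₀ hC, mul_comm]
  by_cases hw : eLpNorm (fun x => w x / ω x) ⊤ μ = ⊤
  · simp [hw, ENNReal.mul_top hC₀]
  · exact h w z hv hw

lemma ae_abs_le_toReal_mul_of_eLpNorm_div_ne_top (hω : ∀ x, 0 < ω x)
    (hw : eLpNorm (fun x => w x / ω x) ⊤ μ ≠ ⊤) :
    ∀ᵐ x ∂μ, |w x| ≤ (eLpNorm (fun x => w x / ω x) ⊤ μ).toReal * ω x := by
  filter_upwards [eLpNorm_exponent_top (f := fun x => w x / ω x) ▸ ae_le_eLpNormEssSup] with x hx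
  have := ENNReal.toReal_mono hw hx
  rwa [toReal_enorm, Real.norm_eq_abs, abs_div, abs_of_pos (hω x), div_le_iff₀ (hω x)] at this

lemma exists_measurable_truncation_of_eq_add (hω_meas : Measurable ω) (hω : ∀ x, 0 < ω x)
    {f z : α → ℝ} (hf : Measurable f) (hfwz : f = w + z)
    (hw : eLpNorm (fun x => w x / ω x) ⊤ μ ≠ ⊤) :
    ∃ g : α → ℝ, Measurable g ∧
      (∀ x, |g x| ≤ (eLpNorm (fun x => w x / ω x) ⊤ μ).toReal * ω x) ∧
      ∀ᵐ x ∂μ, ‖f x - g x‖ ≤ ‖z x‖ := by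
  set M := fun x => (eLpNorm (fun x => w x / ω x) ⊤ μ).toReal * ω x
  refine ⟨fun x => max (-M x) (min (f x) (M x)), by fun_prop,
    fun x => abs_max_neg_min_le (mul_nonneg ENNReal.toReal_nonneg (hω x).le), ?_⟩
  filter_upwards [ae_abs_le_toReal_mul_of_eLpNorm_div_ne_top hω hw] with x hx
  have hz : f x - w x = z x := by simp [hfwz]
  exact (abs_sub_max_neg_min_le hx).trans_eq (congrArg abs hz)

end XNorm

section Slices

variable {T E F : Type*} [MeasurableSpace T] [MeasurableSpace E] [NormedAddCommGroup F]
  {ν : Measure T} {μ : Measure E}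

lemma eLpNorm_eLpNorm_slice_eq_eLpNorm_prod [SFinite ν] [SFinite μ] {p : ℝ≥0∞} (hp₀ : p ≠ 0)
    (hp : p ≠ ⊤) {f : T × E → F} (hf : AEStronglyMeasurable f (ν.prod μ)) :
    eLpNorm (fun x => eLpNorm (fun r => f (r, x)) p ν) p μ = eLpNorm f p (ν.prod μ) := by
  simp only [eLpNorm_eq_lintegral_rpow_enorm_toReal hp₀ hp, enorm_eq_self]
  rw [lintegral_prod_symm _ (hf.enorm.pow_const _)]
  congr 1
  refine lintegral_congr fun x => ?_
  rw [← ENNReal.rpow_mul, one_div_mul_cancel (ENNReal.toReal_pos hp₀ hp).ne', ENNReal.rpow_one]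

lemma eLpNorm_integral_slice_le [NormedSpace ℝ F] [IsFiniteMeasure ν] [SFinite μ] {p : ℝ≥0∞}
    (hp₁ : 1 ≤ p) (hp : p ≠ ⊤) {f : T × E → F} (hf : StronglyMeasurable f) :
    eLpNorm (fun x => ∫ r, f (r, x) ∂ν) p μ ≤
      ν Set.univ ^ (1 - 1 / p.toReal) * eLpNorm f p (ν.prod μ) := by
  have hp₀ : p ≠ 0 := (zero_lt_one.trans_le hp₁).ne'
  have slice_le (x : E) : ‖∫ r, f (r, x) ∂ν‖ₑ ≤
      ν Set.univ ^ (1 - 1 / p.toReal) * eLpNorm (fun r => f (r, x)) p ν := by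
    calc ‖∫ r, f (r, x) ∂ν‖ₑ ≤ eLpNorm (fun r => f (r, x)) 1 ν := by
          rw [eLpNorm_one_eq_lintegral_enorm]; exact enorm_integral_le_lintegral_enorm _
      _ ≤ eLpNorm (fun r => f (r, x)) p ν * ν Set.univ ^ (1 / (1 : ℝ≥0∞).toReal - 1 / p.toReal) :=
          eLpNorm_le_eLpNorm_mul_rpow_measure_univ hp₁
            (hf.comp_measurable measurable_prodMk_right).aestronglyMeasurable
      _ = _ := by rw [mul_comm, ENNReal.toReal_one, div_one]
  have hC : ν Set.univ ^ (1 - 1 / p.toReal) ≠ ⊤ :=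
    ENNReal.rpow_ne_top_of_nonneg (sub_nonneg.2 (div_le_one_of_le₀
      (by simpa using ENNReal.toReal_mono hp hp₁) ENNReal.toReal_nonneg)) (measure_ne_top ν _)
  rw [← eLpNorm_eLpNorm_slice_eq_eLpNorm_prod hp₀ hp hf.aestronglyMeasurable,
    ← ENNReal.coe_toNNReal hC]
  rw [← ENNReal.coe_toNNReal hC] at slice_le
  exact eLpNorm_le_mul_eLpNorm_of_ae_le_mul' (ae_of_all _ fun x => by simpa using slice_le x) p

lemma eLpNorm_top_integral_slice_div_le [IsFiniteMeasure ν] {ω : E → ℝ} (hω : ∀ x, 0 < ω x)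
    {g : T × E → ℝ} {M : ℝ} (hg : ∀ r x, |g (r, x)| ≤ M * ω x) :
    eLpNorm (fun x => (∫ r, g (r, x) ∂ν) / ω x) ⊤ μ ≤ ν Set.univ * ENNReal.ofReal M := by
  rw [eLpNorm_exponent_top]
  refine (eLpNormEssSup_le_of_ae_bound (C := ν.real Set.univ * M)
    (ae_of_all _ fun x => ?_)).trans_eq
    (by rw [ENNReal.ofReal_mul measureReal_nonneg, ofReal_measureReal])
  have := norm_integral_le_of_norm_le_const (μ := ν) (f := fun r => g (r, x))
    (ae_of_all _ fun r => hg r x)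
  rw [Real.norm_eq_abs] at this ⊢
  rw [abs_div, abs_of_pos (hω x), div_le_iff₀ (hω x)]
  linarith

theorem XNorm_integral_slice_le [SFinite μ] (hν : ν Set.univ ≤ 1) {q : ℝ} (hq : 1 ≤ q)
    {ω : E → ℝ} (hω_meas : Measurable ω) (hω : ∀ x, 0 < ω x) {f : T × E → ℝ}
    (hf : Measurable f) (hf_int : ∀ x, Integrable (fun r => f (r, x)) ν) :
    XNorm μ q ω (fun x => ∫ r, f (r, x) ∂ν) ≤
      ν Set.univ ^ (1 - 1 / q) * XNorm (ν.prod μ) q (fun z => ω z.2) f := by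
  have : IsFiniteMeasure ν := ⟨hν.trans_lt ENNReal.one_lt_top⟩
  rcases eq_zero_or_neZero ν with rfl | hν₀
  · simp [← Pi.zero_def, XNorm_zero]
  have hexp : 0 ≤ 1 - 1 / q := sub_nonneg.2 (div_le_one_of_le₀ hq (by linarith))
  have hq' : (ENNReal.ofReal q).toReal = q := ENNReal.toReal_ofReal (by linarith)
  refine le_mul_XNorm (by simp [ENNReal.rpow_eq_zero_iff, NeZero.ne])
    (ENNReal.rpow_ne_top_of_nonneg hexp (measure_ne_top ν _)) fun w z hfwz hw => ?_
  obtain ⟨g, hg_meas, hg_le, hfg_le⟩ := exists_measurable_truncation_of_eq_add (μ := ν.prod μ)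
    (ω := fun y => ω y.2) (by fun_prop) (fun y => hω y.2) hf hfwz hw
  set A := eLpNorm (fun y => w y / ω y.2) ⊤ (ν.prod μ)
  have hg_int (x : E) : Integrable (fun r => g (r, x)) ν :=
    .of_bound (hg_meas.comp measurable_prodMk_right).aestronglyMeasurable (A.toReal * ω x)
      (ae_of_all _ fun r => hg_le (r, x))
  have hsplit : (fun x => ∫ r, f (r, x) ∂ν) =
      (fun x => ∫ r, g (r, x) ∂ν) + fun x => ∫ r, (f - g) (r, x) ∂ν := by
    ext x
    simp [integral_sub (hf_int x) (hg_int x)]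
  calc XNorm μ q ω (fun x => ∫ r, f (r, x) ∂ν)
      ≤ ν Set.univ * A + ν Set.univ ^ (1 - 1 / q) * eLpNorm (f - g) (.ofReal q) (ν.prod μ) := by
        refine (XNorm_le_of_eq_add hsplit).trans (add_le_add ?_ ?_)
        · exact (eLpNorm_top_integral_slice_div_le hω fun r x => hg_le (r, x)).trans_eq
            (by rw [ENNReal.ofReal_toReal hw])
        · simpa [hq'] using eLpNorm_integral_slice_le (ENNReal.one_le_ofReal.2 hq)
            ENNReal.ofReal_ne_top (hf.sub hg_meas).stronglyMeasurable
    _ ≤ ν Set.univ ^ (1 - 1 / q) * A +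
          ν Set.univ ^ (1 - 1 / q) * eLpNorm z (.ofReal q) (ν.prod μ) := by
        gcongr
        · simpa using ENNReal.rpow_le_rpow_of_exponent_ge hν
            (sub_le_self 1 (one_div_nonneg.2 (by linarith)))
        · exact eLpNorm_mono_ae hfg_le
    _ = _ := (mul_add _ _ _).symm

end Slices

lemma volume_restrict_Qset (d : ℕ) :
    volume.restrict (Qset d) = (volume.restrict (Set.Ioo (0 : ℝ) 1)).prod volume := by
  rw [Qset, Measure.volume_eq_prod, ← Measure.prod_restrict, Measure.restrict_univ]

theorem stmt13_general (d : ℕ) (p q : ℝ) (hq : 1 < q)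
    (hpq : 1 / p + 1 / q = 1)
    (β : ℝ × (Fin d → ℝ) → ℝ) (hβ_meas : Measurable β)
    (hβt : ∀ x : Fin d → ℝ,
      MemLp (fun s => β (s, x)) (ENNReal.ofReal q) (volume.restrict (Set.Ioo (0:ℝ) 1))) :
    ∀ s t : ℝ, 0 ≤ s → s ≤ t → t ≤ 1 →
      XNorm (volume : Measure (Fin d → ℝ)) q (fun x => 1 + ∑ i, x i ^ 2)
          (fun x => ∫ r in s..t, β (r, x)) ≤
        ENNReal.ofReal ((t - s) ^ (1 / p)) *
          XNorm (volume.restrict (Qset d)) q (fun z => 1 + ∑ i, z.2 i ^ 2) β := by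
  intro s t hs hst ht
  have hIoo : Set.Ioo s t ⊆ Set.Ioo 0 1 := Set.Ioo_subset_Ioo hs ht
  have hB : (fun x => ∫ r in s..t, β (r, x)) = fun x => ∫ r in Set.Ioo s t, β (r, x) := by
    ext x
    rw [intervalIntegral.integral_of_le hst, Measure.restrict_congr_set Ioo_ae_eq_Ioc]
  have hν : volume (Set.Ioo s t) = ENNReal.ofReal (t - s) := Real.volume_Ioo
  calc _ ≤ volume (Set.Ioo s t) ^ (1 - 1 / q) *
          XNorm ((volume.restrict (Set.Ioo s t)).prod volume) q
            (fun z : ℝ × (Fin d → ℝ) => 1 + ∑ i, z.2 i ^ 2) β := by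
        rw [hB, ← Measure.restrict_apply_univ]
        refine XNorm_integral_slice_le (by simp [hν]; linarith) hq.le (by fun_prop)
          (fun x => by positivity) hβ_meas fun x => ?_
        exact ((hβt x).integrable (ENNReal.one_le_ofReal.2 hq.le)).mono_measure
          (Measure.restrict_mono_set _ hIoo)
    _ ≤ _ := by
        rw [hν, show 1 / p = 1 - 1 / q by linarith, ENNReal.ofReal_rpow_of_nonneg (by linarith)
          (sub_nonneg.2 (div_le_one_of_le₀ hq.le (by linarith))), volume_restrict_Qset]
        gcongr
        exact XNorm_mono_measure (Measure.prod_mono (Measure.restrict_mono_set _ hIoo) le_rfl)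

/-- if `β ∈ X^q(Q)` then `B(t,x) = ∫_{1/2}^t β(s,x) ds` is
`(1/p)`-Hölder from `[0,1]` into `X^q(ℝᵈ)`:
`‖B(t,·) - B(s,·)‖_{X^q(ℝᵈ)} ≤ (t-s)^{1/p} ‖β‖_{X^q(Q)}`. -/
theorem stmt13 (d : ℕ) (p q : ℝ) (hp : 1 < p) (hq : 1 < q)
    (hpq : 1 / p + 1 / q = 1)
    (β : ℝ × (Fin d → ℝ) → ℝ) (hβ_meas : Measurable β)
    (hβt : ∀ x : Fin d → ℝ,
      MemLp (fun s => β (s, x)) (ENNReal.ofReal q) (volume.restrict (Set.Ioo (0:ℝ) 1)))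
    (hβX : MemX (volume.restrict (Qset d)) q (fun z => 1 + ∑ i, z.2 i ^ 2) β) :
    ∀ s t : ℝ, 0 ≤ s → s ≤ t → t ≤ 1 →
      XNorm (volume : Measure (Fin d → ℝ)) q (fun x => 1 + ∑ i, x i ^ 2)
          (fun x => ∫ r in s..t, β (r, x)) ≤
        ENNReal.ofReal ((t - s) ^ (1 / p)) *
          XNorm (volume.restrict (Qset d)) q (fun z => 1 + ∑ i, z.2 i ^ 2) β :=
  stmt13_general d p q hq hpq β hβ_meas hβt
end

section
/- Let ℒ : 𝔸 × 𝔹 → ℝ be concave in the first variable and convex in the second, where 𝔸, 𝔹 are convex subsets of vector spaces and 𝔹 carries a Hausdorff topology. Suppose there exist a⋆ ∈ 𝔸 and C⋆ > sup_{a∈𝔸} inf_{b∈𝔹} ℒ(a,b) such that 𝔹⋆ := {b ∈ 𝔹 : ℒ(a⋆,b) ≤ C⋆} is nonempty and compact, and b ↦ ℒ(a,b) is lower semicontinuous on 𝔹⋆ for every a ∈ 𝔸. Then min_{b∈𝔹} sup_{a∈𝔸} ℒ(a,b) = sup_{a∈𝔸} inf_{b∈𝔹} ℒ(a,b), with the minimum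 on the left attained. -/
/-!
Fix `c = sup_a inf_b ℒ(a, b)`. For finitely many constraints `ℒ(aᵢ, b) ≤ rᵢ` with all `rᵢ > c`,
a common solution `b ∈ 𝔹` exists: otherwise separating `0` from the open convex upper set
`{u | ∃ b ∈ 𝔹, ∀ i, ℒ(aᵢ, b) - rᵢ < uᵢ}` produces weights `wᵢ` with
`∑ wᵢ rᵢ ≤ ∑ wᵢ ℒ(aᵢ, b) ≤ ℒ(∑ wᵢ aᵢ, b)` for all `b`, hence `c < ∑ wᵢ rᵢ ≤ c`.
Adding the constraint `ℒ(a⋆, b) ≤ C⋆` puts the solution in the compact set `𝔹⋆`, on which the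
constraints are closed by lower semicontinuity; the finite intersection property gives a `b` with
`ℒ(a, b) ≤ r` for all `a ∈ 𝔸` and `r > c`.
-/

open Set

theorem IsUpperSet.exists_mem_stdSimplex_forall_pos_sum {ι : Type*} [Fintype ι]
    {K : Set (ι → ℝ)} (hKc : Convex ℝ K) (hKo : IsOpen K) (hKu : IsUpperSet K)
    (hKne : K.Nonempty) (h0 : (0 : ι → ℝ) ∉ K) :
    ∃ w ∈ stdSimplex ℝ ι, ∀ k ∈ K, 0 < ∑ i, w i * k i := by
  classical
  obtain ⟨f, hf⟩ := geometric_hahn_banach_point_open hKc hKo h0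
  simp only [map_zero] at hf
  set e : ι → ι → ℝ := fun i j => if i = j then 1 else 0
  have he (i : ι) : 0 ≤ e i := fun j => by simp only [e]; split_ifs <;> norm_num
  have hf_sum (k : ι → ℝ) : f k = ∑ i, f (e i) * k i := by
    simpa [mul_comm] using f.toLinearMap.pi_apply_eq_sum_univ k
  obtain ⟨k₀, hk₀⟩ := hKne
  have hnonneg (i : ι) : 0 ≤ f (e i) := by
    by_contra! hneg
    -- `K` is an upper set, so it contains the point on the ray `k₀ + t • e i` where `f` vanishes.
    have ht : 0 ≤ f k₀ / -f (e i) := div_nonneg (hf k₀ hk₀).le (neg_nonneg.2 hneg.le)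
    have hzero : f (k₀ + (f k₀ / -f (e i)) • e i) = 0 := by
      rw [map_add, map_smul, smul_eq_mul, div_neg, neg_mul, div_mul_cancel₀ _ hneg.ne,
        add_neg_cancel]
    exact (hf _ (hKu (le_add_of_nonneg_right (smul_nonneg ht (he i))) hk₀)).ne' hzero
  set S := ∑ i, f (e i)
  have hS : 0 < S := by
    refine (Finset.sum_nonneg fun i _ => hnonneg i).lt_of_ne fun hS => ?_
    have hzero := (Finset.sum_eq_zero_iff_of_nonneg fun i _ => hnonneg i).1 hS.symm
    simpa [hf_sum k₀, hzero] using hf k₀ hk₀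
  refine ⟨fun i => f (e i) / S, ⟨fun i => div_nonneg (hnonneg i) hS.le, ?_⟩, fun k hk => ?_⟩
  · rw [← Finset.sum_div, div_self hS.ne']
  · have : 0 < f k / S := div_pos (hf k hk) hS
    rw [hf_sum, Finset.sum_div] at this
    exact this.trans_eq (Finset.sum_congr rfl fun i _ => (div_mul_eq_mul_div _ _ _).symm)

theorem ConvexOn.exists_mem_stdSimplex_forall_sum_le {ι F : Type*} [Fintype ι]
    [AddCommGroup F] [Module ℝ F] {B : Set F} (hB : B.Nonempty) {g : ι → F → ℝ}
    (hg : ∀ i, ConvexOn ℝ B (g i)) {ρ : ι → ℝ} (h : ∀ b ∈ B, ∃ i, ρ i < g i b) :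
    ∃ w ∈ stdSimplex ℝ ι, ∀ b ∈ B, ∑ i, w i • ρ i ≤ ∑ i, w i • g i b := by
  obtain ⟨b₀, hb₀⟩ := hB
  obtain ⟨i₀, -⟩ := h b₀ hb₀
  set K : Set (ι → ℝ) := {u | ∃ b ∈ B, ∀ i, g i b - ρ i < u i}
  have hKc : Convex ℝ K := by
    rintro u ⟨b, hb, hu⟩ v ⟨b', hb', hv⟩ s t hs ht hst
    refine ⟨s • b + t • b', (hg i₀).1 hb hb' hs ht hst, fun i => ?_⟩
    have hρ : ρ i = s * ρ i + t * ρ i := by rw [← add_mul, hst, one_mul]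
    have hgi := (hg i).2 hb hb' hs ht hst
    simp only [smul_eq_mul, Pi.add_apply, Pi.smul_apply] at hgi ⊢
    have hlt : s * (g i b - ρ i) + t * (g i b' - ρ i) < s * u i + t * v i := by
      rcases hs.eq_or_lt with rfl | hs
      · simp only [zero_add] at hst
        simpa [hst] using hv i
      · exact add_lt_add_of_lt_of_le (mul_lt_mul_of_pos_left (hu i) hs)
          (mul_le_mul_of_nonneg_left (hv i).le ht)
    linarith
  have hKo : IsOpen K := by
    have : K = ⋃ b ∈ B, Set.pi univ fun i => Ioi (g i b - ρ i) := by ext; simp [K]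
    rw [this]
    exact isOpen_biUnion fun b _ => isOpen_set_pi finite_univ fun i _ => isOpen_Ioi
  have hKu : IsUpperSet K := fun u v huv ⟨b, hb, hu⟩ => ⟨b, hb, fun i => (hu i).trans_le (huv i)⟩
  have hKne : K.Nonempty := ⟨fun i => g i b₀ - ρ i + 1, b₀, hb₀, fun i => lt_add_one _⟩
  have h0 : (0 : ι → ℝ) ∉ K := by
    rintro ⟨b, hb, hneg⟩
    obtain ⟨i, hi⟩ := h b hb
    linarith [show g i b - ρ i < 0 from hneg i]
  obtain ⟨w, hw, hwK⟩ := hKu.exists_mem_stdSimplex_forall_pos_sum hKc hKo hKne h0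
  refine ⟨w, hw, fun b hb => le_of_forall_pos_lt_add fun ε hε => ?_⟩
  have := hwK (fun i => g i b - ρ i + ε) ⟨b, hb, fun i => lt_add_of_pos_right _ hε⟩
  simp only [mul_add, mul_sub, Finset.sum_add_distrib, Finset.sum_sub_distrib, ← Finset.sum_mul,
    hw.2, one_mul] at this
  simp only [smul_eq_mul]
  linarith

theorem exists_forall_le_of_ciSup_ciInf_lt {E F : Type*} [AddCommGroup E] [Module ℝ E]
    [AddCommGroup F] [Module ℝ F] {A : Set E} {B : Set F} (hA : Convex ℝ A) (hB : B.Nonempty)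
    {L : E → F → ℝ} (hconc : ∀ b ∈ B, ConcaveOn ℝ A (fun a => L a b))
    (hconv : ∀ a ∈ A, ConvexOn ℝ B (L a))
    (hbdd : BddAbove (range fun a : A => ⨅ b : B, L a b))
    (s : Finset (E × ℝ)) (hs : ∀ p ∈ s, p.1 ∈ A ∧ ⨆ a : A, ⨅ b : B, L a b < p.2) :
    ∃ b ∈ B, ∀ p ∈ s, L p.1 b ≤ p.2 := by
  by_contra! h
  obtain ⟨w, hw, hwB⟩ := ConvexOn.exists_mem_stdSimplex_forall_sum_le hB
    (g := fun p : s => L p.1.1) (ρ := fun p : s => p.1.2)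
    (fun p => hconv _ (hs p.1 p.2).1) fun b hb => by simpa using h b hb
  have haw : ∑ p : s, w p • p.1.1 ∈ A :=
    hA.sum_mem (fun p _ => hw.1 p) hw.2 fun p _ => (hs p.1 p.2).1
  have hlt : ⨆ a : A, ⨅ b : B, L a b < ∑ p : s, w p • p.1.2 :=
    (convex_Ioi _).sum_mem (fun p _ => hw.1 p) hw.2 fun p _ => mem_Ioi.2 (hs p.1 p.2).2
  have hle : ∑ p : s, w p • p.1.2 ≤ ⨅ b : B, L (∑ p : s, w p • p.1.1) b :=
    have : Nonempty B := hB.to_subtype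
    le_ciInf fun b => (hwB b b.2).trans <|
      (hconc b b.2).le_map_sum (fun p _ => hw.1 p) hw.2 fun p _ => (hs p.1 p.2).1
  exact (hlt.trans_le (hle.trans (le_ciSup hbdd ⟨_, haw⟩))).false

theorem stmt17_general {E F : Type*} [AddCommGroup E] [Module ℝ E]
    [AddCommGroup F] [Module ℝ F] [TopologicalSpace F]
    (A : Set E) (B : Set F) (hA : Convex ℝ A)
    (L : E → F → ℝ)
    (hconc : ∀ b ∈ B, ConcaveOn ℝ A (fun a => L a b))
    (hconv : ∀ a ∈ A, ConvexOn ℝ B (L a))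
    (hBddAbove : BddAbove (Set.range fun a : A => ⨅ b : B, L a.1 b.1))
    (astar : E) (hastar : astar ∈ A) (Cstar : ℝ)
    (hC : (⨆ a : A, ⨅ b : B, L a.1 b.1) < Cstar)
    (hne : ({b ∈ B | L astar b ≤ Cstar}).Nonempty)
    (hcpt : IsCompact {b ∈ B | L astar b ≤ Cstar})
    (hlsc : ∀ a ∈ A, LowerSemicontinuousOn (L a) {b ∈ B | L astar b ≤ Cstar}) :
    ∃ b ∈ B, ∀ a ∈ A, L a b ≤ ⨆ a' : A, ⨅ b' : B, L a'.1 b'.1 := by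
  set c := ⨆ a : A, ⨅ b : B, L a.1 b.1
  set Bstar := {b ∈ B | L astar b ≤ Cstar}
  have hlsc' : ∀ p ∈ A ×ˢ Ioi c, LowerSemicontinuousOn (fun b => L p.1 b - p.2) Bstar :=
    fun p hp => by
      simpa only [sub_eq_add_neg] using (hlsc p.1 hp.1).add lowerSemicontinuousOn_const
  obtain ⟨b, hbB, hb⟩ :
      (Bstar ∩ ⋂ p ∈ A ×ˢ Ioi c, (fun b => L p.1 b - p.2) ⁻¹' Iic 0).Nonempty := by
    rw [nonempty_iff_ne_empty, Ne,
      LowerSemicontinuousOn.inter_biInter_preimage_Iic_eq_empty_iff_exists_finset hcpt hlsc']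
    rintro ⟨u, hu⟩
    classical
    obtain ⟨b, hbB, hb⟩ := exists_forall_le_of_ciSup_ciInf_lt hA ⟨_, hne.some_mem.1⟩ hconc hconv
      hBddAbove (insert (astar, Cstar) (u.map (Function.Embedding.subtype _))) (by
        simp only [Finset.mem_insert, Finset.mem_map, Function.Embedding.coe_subtype]
        rintro p (rfl | ⟨q, -, rfl⟩)
        exacts [⟨hastar, hC⟩, q.2])
    obtain ⟨p, hp, hlt⟩ := hu b ⟨hbB, hb _ (Finset.mem_insert_self _ _)⟩
    have := hb p (Finset.mem_insert_of_mem (Finset.mem_map_of_mem _ hp))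
    linarith
  refine ⟨b, hbB.1, fun a ha => le_of_forall_gt_imp_ge_of_dense fun r hr => ?_⟩
  simpa [sub_nonpos] using mem_iInter₂.1 hb (a, r) ⟨ha, hr⟩

/-- Von Neumann minimax theorem with one-sided compactness:
if `ℒ` is concave–convex on convex sets `A × B`, some sublevel set
`B⋆ = {b ∈ B : ℒ(a⋆,b) ≤ C⋆}` (with `C⋆ > sup inf ℒ`) is nonempty and compact,
and `ℒ(a,·)` is lower semicontinuous on `B⋆`, then the minimum over `b` of
`sup_a ℒ(a,b)` is attained and equals `sup_a inf_b ℒ(a,b)`. -/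
theorem stmt17 {E F : Type*} [AddCommGroup E] [Module ℝ E]
    [AddCommGroup F] [Module ℝ F] [TopologicalSpace F] [T2Space F]
    (A : Set E) (B : Set F) (hA : Convex ℝ A) (hB : Convex ℝ B)
    (L : E → F → ℝ)
    (hconc : ∀ b ∈ B, ConcaveOn ℝ A (fun a => L a b))
    (hconv : ∀ a ∈ A, ConvexOn ℝ B (L a))
    (hBddBelow : ∀ a : A, BddBelow (Set.range fun b : B => L a.1 b.1))
    (hBddAbove : BddAbove (Set.range fun a : A => ⨅ b : B, L a.1 b.1))
    (astar : E) (hastar : astar ∈ A) (Cstar : ℝ)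
    (hC : (⨆ a : A, ⨅ b : B, L a.1 b.1) < Cstar)
    (hne : ({b ∈ B | L astar b ≤ Cstar}).Nonempty)
    (hcpt : IsCompact {b ∈ B | L astar b ≤ Cstar})
    (hlsc : ∀ a ∈ A, LowerSemicontinuousOn (L a) {b ∈ B | L astar b ≤ Cstar}) :
    ∃ b ∈ B, ∀ a ∈ A, L a b ≤ ⨆ a' : A, ⨅ b' : B, L a'.1 b'.1 :=
  stmt17_general A B hA L hconc hconv hBddAbove astar hastar Cstar hC hne hcpt hlsc
end
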